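/- arXiv:2207.11208 — 4 statements merged into one kernel-verified Lean document; each statement's English description precedes it below -/
import Mathlib

section
/- Let Ω be a real symmetric d×d matrix with eigenvalues μ₁ ≥ … ≥ μ_d and orthonormal eigenvectors u₁,…,u_d, and let u be a unit vector. Fix k, and suppose for every index j > k with μ_j ≤ μ_k − ε·γ (for γ ≥ 1) we have Σ_{s: μ_s ≤ μ_k − εγ} ⟨u,u_s⟩² ≤ 1/γ². Then uᵀΩu ≥ μ_k − 2ε. -/
/-!
Write `c j = (v ⬝ᵥ u j)²` and `g j = μ k - μ j`. Parseval gives `∑ c j = 1` and the quadratic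
form is `∑ μ j c j`, so it suffices that `∑ g j c j ≤ 2ε`. Capping every gap at `ε` costs at most
`ε`; the excess `∑ (g j - ε)⁺ c j` is the integral over `t ≥ ε` of the tail mass
`∑_{g j ≥ t} c j ≤ ε² / t²`, hence at most `ε`. The integral is taken in discrete form, by
induction over the gap values: stepping from one level `b` to the next `b'` costs
`(b' - b) ε² / b'² ≤ ε² / b - ε² / b'`.
-/

open Matrix

theorem dotProduct_sum_smul_vecMulVec_mulVec {n R : Type*} [Fintype n] [CommSemiring R]
    (u : n → n → R) (μ : n → R) (v : n → R) :
    v ⬝ᵥ ((∑ j, μ j • vecMulVec (u j) (u j)) *ᵥ v) = ∑ j, μ j * (v ⬝ᵥ u j) ^ 2 := by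
  simp only [sum_mulVec, dotProduct_sum, smul_mulVec, vecMulVec_mulVec, dotProduct_smul,
    MulOpposite.smul_eq_mul_unop, MulOpposite.unop_op, smul_eq_mul]
  refine Finset.sum_congr rfl fun j _ => ?_
  rw [dotProduct_comm (u j) v]; ring

theorem sum_sq_dotProduct_of_orthonormal {n R : Type*} [Fintype n] [DecidableEq n] [CommRing R]
    (u : n → n → R) (hu : ∀ i j, u i ⬝ᵥ u j = if i = j then 1 else 0) (v : n → R) :
    ∑ j, (v ⬝ᵥ u j) ^ 2 = v ⬝ᵥ v := by
  set U : Matrix n n R := Matrix.of u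
  have hUUt : U * Uᵀ = 1 := by
    ext i j
    simpa [U, Matrix.mul_apply, Matrix.one_apply, dotProduct] using hu i j
  have hUtU : Uᵀ * U = 1 := mul_eq_one_comm.mp hUUt
  calc ∑ j, (v ⬝ᵥ u j) ^ 2 = (U *ᵥ v) ⬝ᵥ (U *ᵥ v) := by
        have hUv : ∀ j, (U *ᵥ v) j = v ⬝ᵥ u j := fun j => dotProduct_comm _ _
        show _ = ∑ j, (U *ᵥ v) j * (U *ᵥ v) j
        simp only [hUv, sq]
    _ = v ⬝ᵥ v := by
        rw [dotProduct_mulVec, ← mulVec_transpose, mulVec_mulVec, hUtU, one_mulVec,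
          dotProduct_comm]

theorem div_add_sub_mul_div_sq_le {a b b' : ℝ} (ha : 0 ≤ a) (hb : 0 < b) (hbb' : b ≤ b') :
    a / b' + (b' - b) * (a / b' ^ 2) ≤ a / b := by
  have hb' : 0 < b' := hb.trans_le hbb'
  rw [mul_div_assoc', div_add_div _ _ hb'.ne' (by positivity), div_le_div_iff₀ (by positivity) hb]
  nlinarith [mul_nonneg ha (sq_nonneg (b' - b))]

namespace Finset

variable {ι : Type*} (s : Finset ι) (g c : ι → ℝ)

theorem sum_filter_lt_sub_mul_eq_of_gap {b b' : ℝ} (hbb' : b < b')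
    (hgap : ∀ j ∈ s, b < g j → b' ≤ g j) :
    ∑ j ∈ s with b < g j, (g j - b) * c j
      = ∑ j ∈ s with b' < g j, (g j - b') * c j + (b' - b) * ∑ j ∈ s with b' ≤ g j, c j := by
  simp only [sum_filter, mul_sum, ← sum_add_distrib]
  refine sum_congr rfl fun j hj => ?_
  have := hgap j hj
  split_ifs <;> grind

theorem sum_filter_lt_sub_mul_le_of_tail_le {a b₀ : ℝ} (ha : 0 ≤ a) (hb₀ : 0 < b₀)
    (htail : ∀ t, b₀ ≤ t → ∑ j ∈ s with t ≤ g j, c j ≤ a / t ^ 2) {b : ℝ} (hb : b₀ ≤ b) :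
    ∑ j ∈ s with b < g j, (g j - b) * c j ≤ a / b := by
  induction hn : #{j ∈ s | b < g j} using Nat.strong_induction_on generalizing b with
  | _ n ih =>
  have hb0 : 0 < b := hb₀.trans_le hb
  rcases {j ∈ s | b < g j}.eq_empty_or_nonempty with hempty | hne
  · rw [hempty, sum_empty]; positivity
  obtain ⟨j₀, hj₀, hmin⟩ := exists_min_image _ g hne
  have hbj₀ : b < g j₀ := (mem_filter.mp hj₀).2
  have hgap : ∀ j ∈ s, b < g j → g j₀ ≤ g j := fun j hj hbj => hmin j (mem_filter.mpr ⟨hj, hbj⟩)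
  have hcard : #{j ∈ s | g j₀ < g j} < n := by
    rw [← hn]
    refine card_lt_card ((ssubset_iff_of_subset ?_).mpr ⟨j₀, hj₀, by simp⟩)
    exact monotone_filter_right s fun j _ h => hbj₀.trans h
  rw [sum_filter_lt_sub_mul_eq_of_gap s g c hbj₀ hgap]
  calc _ ≤ a / g j₀ + (g j₀ - b) * (a / g j₀ ^ 2) :=
        add_le_add (ih _ hcard (hb.trans hbj₀.le) rfl)
          (mul_le_mul_of_nonneg_left (htail _ (hb.trans hbj₀.le)) (sub_nonneg.mpr hbj₀.le))
    _ ≤ a / b := div_add_sub_mul_div_sq_le ha hb0 hbj₀.le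

theorem sum_mul_le_of_tail_le (hc : ∀ j ∈ s, 0 ≤ c j) {ε : ℝ} (hε : 0 < ε)
    (htail : ∀ t, ε ≤ t → ∑ j ∈ s with t ≤ g j, c j ≤ ε ^ 2 / t ^ 2) :
    ∑ j ∈ s, g j * c j ≤ ε * ∑ j ∈ s, c j + ε := by
  have hexcess : ∑ j ∈ s, (g j - ε) * c j ≤ ∑ j ∈ s with ε < g j, (g j - ε) * c j := by
    rw [sum_filter]
    refine sum_le_sum fun j hj => ?_
    split_ifs with hgj
    · exact le_rfl
    · exact mul_nonpos_of_nonpos_of_nonneg (by linarith) (hc j hj)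
  have hlayer := sum_filter_lt_sub_mul_le_of_tail_le s g c (sq_nonneg ε) hε htail le_rfl
  rw [sq, mul_div_cancel_right₀ _ hε.ne'] at hlayer
  calc ∑ j ∈ s, g j * c j = ∑ j ∈ s, (g j - ε) * c j + ε * ∑ j ∈ s, c j := by
        rw [mul_sum, ← sum_add_distrib]; exact sum_congr rfl fun j _ => by ring
    _ ≤ ε * ∑ j ∈ s, c j + ε := by linarith

end Finset

theorem stmt_6_general {d : ℕ} (u : Fin d → (Fin d → ℝ)) (μ : Fin d → ℝ) (ε : ℝ) (hε : 0 < ε)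
    (v : Fin d → ℝ) (k : Fin d)
    (hortho : ∀ i j, u i ⬝ᵥ u j = if i = j then 1 else 0)
    (hunit : v ⬝ᵥ v = 1)
    (hoverlap : ∀ γ : ℝ, 1 ≤ γ →
      ∑ s ∈ Finset.univ.filter (fun s => μ s ≤ μ k - ε * γ), (v ⬝ᵥ u s) ^ 2 ≤ 1 / γ ^ 2) :
    μ k - 2 * ε ≤ v ⬝ᵥ ((∑ j : Fin d, μ j • Matrix.vecMulVec (u j) (u j)) *ᵥ v) := by
  have hmass : ∑ j, (v ⬝ᵥ u j) ^ 2 = 1 := (sum_sq_dotProduct_of_orthonormal u hortho v).trans hunit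
  have htail : ∀ t, ε ≤ t →
      ∑ j ∈ Finset.univ with t ≤ μ k - μ j, (v ⬝ᵥ u j) ^ 2 ≤ ε ^ 2 / t ^ 2 := by
    intro t ht
    have h := hoverlap (t / ε) ((one_le_div hε).mpr ht)
    rw [mul_div_cancel₀ t hε.ne', div_pow, one_div_div] at h
    simpa only [le_sub_comm] using h
  have hgap := Finset.sum_mul_le_of_tail_le Finset.univ (fun j => μ k - μ j) _
    (fun j _ => sq_nonneg (v ⬝ᵥ u j)) hε htail
  simp only [sub_mul, Finset.sum_sub_distrib, ← Finset.mul_sum, hmass] at hgap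
  rw [dotProduct_sum_smul_vecMulVec_mulVec]
  linarith

/-- If `Ω = Σ_j μ_j u_j u_jᵀ` with orthonormal eigenvectors `u_j` and decreasing
eigenvalues `μ`, `v` is a unit vector, and for every `γ ≥ 1` the squared overlap of `v`
with eigenvectors whose eigenvalues are at most `μ_k − εγ` is at most `1/γ²`,
then `vᵀ Ω v ≥ μ_k − 2ε`. -/
theorem stmt_6 {d : ℕ} (u : Fin d → (Fin d → ℝ)) (μ : Fin d → ℝ) (ε : ℝ) (hε : 0 < ε)
    (v : Fin d → ℝ) (k : Fin d)
    (hortho : ∀ i j, u i ⬝ᵥ u j = if i = j then 1 else 0)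
    (hmono : Antitone μ)
    (hunit : v ⬝ᵥ v = 1)
    (hoverlap : ∀ γ : ℝ, 1 ≤ γ →
      ∑ s ∈ Finset.univ.filter (fun s => μ s ≤ μ k - ε * γ), (v ⬝ᵥ u s) ^ 2 ≤ 1 / γ ^ 2) :
    μ k - 2 * ε ≤ v ⬝ᵥ ((∑ j : Fin d, μ j • Matrix.vecMulVec (u j) (u j)) *ᵥ v) :=
  stmt_6_general u μ ε hε v k hortho hunit hoverlap
end

section
/- Let λ, λ̃ ∈ ℝ^p and λ∞ ∈ ℝ^d with p ≤ d. Suppose λ̃_k ≥ λ∞_k − 2ε for all k ≤ p (where λ∞ is sorted decreasingly and nonnegative), and Σ_{k=1}^p λ̃_k² ≤ Σ_{k=1}^d (λ∞_k)². Then Σ_{k=1}^p (λ∞_k − λ̃_k)² ≤ Σ_{k=p+1}^d (λ∞_k)² + 4ε Σ_{k=1}^p λ∞_k. -/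
/-! Expanding `(a - b)² = b² - a² + 2a(a - b)` and bounding `a(a - b) ≤ 2εa` termwise reduces the
claim to `Σ_{k<p} λ̃_k² - Σ_{k<p} λ∞_k² ≤ Σ_{p≤k<d} λ∞_k²`, i.e. to the bound on `Σ_{k<p} λ̃_k²`. -/

lemma sq_sub_le_of_sub_le {a b δ : ℝ} (ha : 0 ≤ a) (hab : a - δ ≤ b) :
    (a - b) ^ 2 ≤ b ^ 2 - a ^ 2 + 2 * δ * a := by
  nlinarith

lemma Finset.sum_sq_sub_le_of_sub_le {ι : Type*} (s : Finset ι) {a b : ι → ℝ} {δ : ℝ}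
    (ha : ∀ i ∈ s, 0 ≤ a i) (hab : ∀ i ∈ s, a i - δ ≤ b i) :
    ∑ i ∈ s, (a i - b i) ^ 2 ≤ ∑ i ∈ s, b i ^ 2 - ∑ i ∈ s, a i ^ 2 + 2 * δ * ∑ i ∈ s, a i := by
  calc ∑ i ∈ s, (a i - b i) ^ 2 ≤ ∑ i ∈ s, (b i ^ 2 - a i ^ 2 + 2 * δ * a i) :=
        Finset.sum_le_sum fun i hi => sq_sub_le_of_sub_le (ha i hi) (hab i hi)
    _ = ∑ i ∈ s, b i ^ 2 - ∑ i ∈ s, a i ^ 2 + 2 * δ * ∑ i ∈ s, a i := by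
        rw [Finset.sum_add_distrib, Finset.sum_sub_distrib, Finset.mul_sum]

theorem stmt_8_general {d p : ℕ} (hpd : p ≤ d) (laminf lamtil : ℕ → ℝ) (ε : ℝ)
    (hnonneg : ∀ k < d, 0 ≤ laminf k)
    (hclose : ∀ k < p, laminf k - 2 * ε ≤ lamtil k)
    (hsum : ∑ k ∈ Finset.range p, (lamtil k) ^ 2 ≤ ∑ k ∈ Finset.range d, (laminf k) ^ 2) :
    ∑ k ∈ Finset.range p, (laminf k - lamtil k) ^ 2 ≤
      (∑ k ∈ Finset.Ico p d, (laminf k) ^ 2) + 4 * ε * ∑ k ∈ Finset.range p, laminf k := by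
  have hsplit := Finset.sum_range_add_sum_Ico (fun k => laminf k ^ 2) hpd
  have hbound := (Finset.range p).sum_sq_sub_le_of_sub_le (a := laminf) (b := lamtil) (δ := 2 * ε)
    (fun k hk => hnonneg k ((Finset.mem_range.mp hk).trans_le hpd))
    (fun k hk => hclose k (Finset.mem_range.mp hk))
  linarith

/-- If `λ∞₁ ≥ … ≥ λ∞_d ≥ 0`, `λ̃_k ≥ λ∞_k − 2ε` for `k < p ≤ d`, and
`Σ_{k<p} λ̃_k² ≤ Σ_{k<d} λ∞_k²`, then
`Σ_{k<p} (λ∞_k − λ̃_k)² ≤ Σ_{p≤k<d} λ∞_k² + 4ε Σ_{k<p} λ∞_k`. -/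
theorem stmt_8 {d p : ℕ} (hpd : p ≤ d) (laminf lamtil : ℕ → ℝ) (ε : ℝ) (hε : 0 < ε)
    (hmono : ∀ k, k + 1 < d → laminf (k + 1) ≤ laminf k)
    (hnonneg : ∀ k < d, 0 ≤ laminf k)
    (hclose : ∀ k < p, laminf k - 2 * ε ≤ lamtil k)
    (hsum : ∑ k ∈ Finset.range p, (lamtil k) ^ 2 ≤ ∑ k ∈ Finset.range d, (laminf k) ^ 2) :
    ∑ k ∈ Finset.range p, (laminf k - lamtil k) ^ 2 ≤
      (∑ k ∈ Finset.Ico p d, (laminf k) ^ 2) + 4 * ε * ∑ k ∈ Finset.range p, laminf k :=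
  stmt_8_general hpd laminf lamtil ε hnonneg hclose hsum
end

section
/- Define f(z) = z − log z − 1 for z > 0. For every z₀ ∈ (0,1] and every z ≥ z₀, f(z) ≤ max{1, log(1/z₀)} · (z − 1)². -/
/-!
Write `f z = z - log z - 1`. The bounds `1 - z⁻¹ ≤ log z` (for `z ≥ 1`) and `sinh (log z) ≤ log z`
(for `z ≤ 1`) give `f z ≤ (z - 1)²` once `z ≥ 1/2`. Below that, the gap `(z - 1)² - f z` increases
on `(0, 1/2]` and the gap `-log z · (z - 1)² - f z` decreases on `(0, e^{-1/2}]`; both equal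
`e⁻² - 3e⁻¹ + 1 > 0` at `z = e⁻¹`. Hence `f z ≤ (z - 1)²` for `z ≥ e⁻¹`, and
`f z ≤ -log z · (z - 1)² ≤ log (1/z₀) · (z - 1)²` for `z₀ ≤ z ≤ e⁻¹`.
-/

open Real Set

lemma sub_log_sub_one_le_sq_div {z : ℝ} (hz : 0 < z) :
    z - log z - 1 ≤ (z - 1) ^ 2 / z := by
  have hlog := one_sub_inv_le_log_of_pos hz
  have hsq : (z - 1) ^ 2 / z = z + z⁻¹ - 2 := by field_simp; ring
  linarith

lemma sub_log_sub_one_le_sq_div_two_mul {z : ℝ} (hz0 : 0 < z) (hz1 : z ≤ 1) :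
    z - log z - 1 ≤ (z - 1) ^ 2 / (2 * z) := by
  have hlog : (z - z⁻¹) / 2 ≤ log z := by
    rw [← sinh_log hz0]
    exact sinh_le_self_iff.2 (log_nonpos hz0.le hz1)
  have hsq : (z - 1) ^ 2 / (2 * z) = (z + z⁻¹) / 2 - 1 := by field_simp; ring
  linarith

lemma sub_log_sub_one_le_sq_of_one_half_le {z : ℝ} (hz : 1 / 2 ≤ z) :
    z - log z - 1 ≤ (z - 1) ^ 2 := by
  have hz0 : 0 < z := by linarith
  have hsq := sq_nonneg (z - 1)
  rcases le_total z 1 with hz1 | hz1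
  · calc z - log z - 1 ≤ (z - 1) ^ 2 / (2 * z) := sub_log_sub_one_le_sq_div_two_mul hz0 hz1
      _ ≤ (z - 1) ^ 2 := div_le_self hsq (by linarith)
  · calc z - log z - 1 ≤ (z - 1) ^ 2 / z := sub_log_sub_one_le_sq_div hz0
      _ ≤ (z - 1) ^ 2 := div_le_self hsq hz1

lemma exp_neg_one_sq_sub_three_mul_add_one_pos : 0 < exp (-1) ^ 2 - 3 * exp (-1) + 1 := by
  have hupper : exp (-1) < 0.38 := by
    rw [exp_neg, inv_lt_comm₀ (exp_pos 1) (by norm_num)]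
    exact lt_trans (by norm_num) exp_one_gt_d9
  nlinarith [exp_pos (-1)]

lemma monotoneOn_sq_sub_sub_log_sub_one :
    MonotoneOn (fun z => (z - 1) ^ 2 - (z - log z - 1)) (Ioc 0 (1 / 2)) := by
  have hderiv : ∀ x : ℝ, 0 < x →
      HasDerivAt (fun z => (z - 1) ^ 2 - (z - log z - 1)) ((2 * x - 1) * (x - 1) / x) x := by
    intro x hx
    refine ((((hasDerivAt_id' x).sub_const 1).pow 2).sub
      (((hasDerivAt_id' x).sub (hasDerivAt_log hx.ne')).sub_const 1)).congr_deriv ?_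
    field_simp
    ring
  refine monotoneOn_of_hasDerivWithinAt_nonneg (f' := fun x => (2 * x - 1) * (x - 1) / x)
    (convex_Ioc 0 (1 / 2))
    (fun x hx => (hderiv x hx.1).continuousAt.continuousWithinAt) (fun x hx => ?_) (fun x hx => ?_)
  all_goals rw [interior_Ioc] at hx
  · exact (hderiv x hx.1).hasDerivWithinAt
  · exact div_nonneg (mul_nonneg_of_nonpos_of_nonpos (by linarith [hx.2]) (by linarith [hx.2]))
      hx.1.le

lemma antitoneOn_neg_log_mul_sq_sub_sub_log_sub_one :
    AntitoneOn (fun z => -log z * (z - 1) ^ 2 - (z - log z - 1)) (Ioc 0 (exp (-1 / 2))) := by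
  have hderiv : ∀ x : ℝ, 0 < x →
      HasDerivAt (fun z => -log z * (z - 1) ^ 2 - (z - log z - 1))
        ((1 - x) * (1 + 2 * log x)) x := by
    intro x hx
    refine (((hasDerivAt_log hx.ne').neg.mul (((hasDerivAt_id' x).sub_const 1).pow 2)).sub
      (((hasDerivAt_id' x).sub (hasDerivAt_log hx.ne')).sub_const 1)).congr_deriv ?_
    simp only [Pi.pow_apply, Pi.neg_apply]
    field_simp
    ring
  refine antitoneOn_of_hasDerivWithinAt_nonpos (f' := fun x => (1 - x) * (1 + 2 * log x))
    (convex_Ioc 0 (exp (-1 / 2)))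
    (fun x hx => (hderiv x hx.1).continuousAt.continuousWithinAt) (fun x hx => ?_) (fun x hx => ?_)
  all_goals rw [interior_Ioc] at hx
  · exact (hderiv x hx.1).hasDerivWithinAt
  · have hlog : log x < -1 / 2 := (log_lt_iff_lt_exp hx.1).2 hx.2
    have hx1 : x < 1 := hx.2.trans (exp_lt_one_iff.2 (by norm_num))
    exact mul_nonpos_of_nonneg_of_nonpos (by linarith) (by linarith)

lemma sub_log_sub_one_le_sq {z : ℝ} (hz : exp (-1) ≤ z) :
    z - log z - 1 ≤ (z - 1) ^ 2 := by
  rcases le_total (1 / 2) z with hz2 | hz2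
  · exact sub_log_sub_one_le_sq_of_one_half_le hz2
  · have he : exp (-1) ∈ Ioc (0 : ℝ) (1 / 2) := ⟨exp_pos _, hz.trans hz2⟩
    have hmono := monotoneOn_sq_sub_sub_log_sub_one he ⟨he.1.trans_le hz, hz2⟩ hz
    simp only [log_exp] at hmono
    nlinarith [exp_neg_one_sq_sub_three_mul_add_one_pos]

lemma sub_log_sub_one_le_neg_log_mul_sq {z : ℝ} (hz0 : 0 < z) (hz : z ≤ exp (-1)) :
    z - log z - 1 ≤ -log z * (z - 1) ^ 2 := by
  have he : exp (-1) ∈ Ioc (0 : ℝ) (exp (-1 / 2)) := ⟨exp_pos _, exp_le_exp.2 (by norm_num)⟩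
  have hanti := antitoneOn_neg_log_mul_sq_sub_sub_log_sub_one ⟨hz0, hz.trans he.2⟩ he hz
  simp only [log_exp] at hanti
  nlinarith [exp_neg_one_sq_sub_three_mul_add_one_pos]

theorem stmt_10_general (z₀ z : ℝ) (hz₀ : 0 < z₀) (hz : z₀ ≤ z) :
    z - Real.log z - 1 ≤ max 1 (Real.log (1 / z₀)) * (z - 1) ^ 2 := by
  have hsq := sq_nonneg (z - 1)
  rcases le_total (exp (-1)) z with hze | hze
  · calc z - log z - 1 ≤ 1 * (z - 1) ^ 2 := by rw [one_mul]; exact sub_log_sub_one_le_sq hze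
      _ ≤ _ := mul_le_mul_of_nonneg_right (le_max_left _ _) hsq
  · have hlog : -log z ≤ log (1 / z₀) := by
      rw [one_div, log_inv, neg_le_neg_iff]
      exact log_le_log hz₀ hz
    calc z - log z - 1 ≤ -log z * (z - 1) ^ 2 :=
          sub_log_sub_one_le_neg_log_mul_sq (hz₀.trans_le hz) hze
      _ ≤ _ := mul_le_mul_of_nonneg_right (hlog.trans (le_max_right _ _)) hsq

/-- For `f(z) = z − log z − 1`, every `z₀ ∈ (0,1]` and every `z ≥ z₀`,
`f(z) ≤ max {1, log(1/z₀)} (z − 1)²`. -/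
theorem stmt_10 (z₀ z : ℝ) (hz₀ : 0 < z₀) (hz₀1 : z₀ ≤ 1) (hz : z₀ ≤ z) :
    z - Real.log z - 1 ≤ max 1 (Real.log (1 / z₀)) * (z - 1) ^ 2 :=
  stmt_10_general z₀ z hz₀ hz
end

section
/- Let T be a symmetric positive definite d×d matrix with all eigenvalues at least z₀ for some z₀ ∈ (0,1]. Then tr(T) − d − log det(T) ≤ max{1, log(1/z₀)} · ‖T − I‖_F². -/
/-!
Diagonalising `T` reduces the claim to the scalar bound
`z - 1 - log z ≤ max 1 (log (1 / z₀)) * (z - 1) ^ 2` at every eigenvalue `z ≥ z₀`.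
For `z ≥ 1` it follows from `log z ≥ 1 - 1 / z`. For `z < 1` put `t = 1 - z`, `s = √z` and
`u = log (1 / z)`; then `u ≤ t / s`, which is `2 log x ≤ x - 1 / x` at `x = 1 / s ≥ 1`
(a consequence of the cubic Taylor bound for `exp`). If `s (1 + t) ≥ 1` this gives `u - t ≤ t ^ 2`;
otherwise `u (1 - t ^ 2) = u s ^ 2 (1 + t) ≤ t s (1 + t) ≤ t`, so `u - t ≤ u t ^ 2` with
`u ≤ log (1 / z₀)`.
-/

open Matrix

namespace Real

lemma two_mul_log_le_sub_inv {s : ℝ} (hs : 1 ≤ s) : 2 * log s ≤ s - s⁻¹ := by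
  have hs0 : 0 < s := one_pos.trans_le hs
  set y := s - s⁻¹
  have hy : 0 ≤ y := by have := inv_le_one_of_one_le₀ hs; linarith
  have hcubic : 1 + y + y ^ 2 / 2 + y ^ 3 / 6 ≤ exp y := by
    simpa [Finset.sum_range_succ, Nat.factorial] using sum_le_exp_of_nonneg hy 4
  have hsq : s ^ 2 ≤ 1 + y + y ^ 2 / 2 + y ^ 3 / 6 := by
    have key : 6 * s ^ 3 * (1 + y + y ^ 2 / 2 + y ^ 3 / 6 - s ^ 2) = (s - 1) ^ 3 * (s ^ 3 + 1) := by
      simp only [y]; field_simp; ring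
    have : 0 ≤ (s - 1) ^ 3 * (s ^ 3 + 1) := by
      have : 0 ≤ s - 1 := by linarith
      positivity
    nlinarith [pow_pos hs0 3]
  calc 2 * log s = log (s ^ 2) := by rw [log_pow]; norm_num
    _ ≤ log (exp y) := log_le_log (by positivity) (hsq.trans hcubic)
    _ = y := log_exp y

lemma log_inv_le_sub_div_sqrt {z : ℝ} (hz : 0 < z) (hz1 : z ≤ 1) : log z⁻¹ ≤ (1 - z) / √z := by
  have hs : 0 < √z := sqrt_pos.mpr hz
  have h := two_mul_log_le_sub_inv (one_le_inv_iff₀.mpr ⟨hs, sqrt_le_one.mpr hz1⟩)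
  rw [log_inv, log_sqrt hz.le, inv_inv] at h
  have hz' : (1 - z) / √z = (√z)⁻¹ - √z := by
    field_simp; rw [sq_sqrt hz.le]
  rw [log_inv, hz']; linarith

lemma sub_one_sub_log_le_sq {z : ℝ} (hz : 1 ≤ z) : z - 1 - log z ≤ (z - 1) ^ 2 := by
  have hz0 : 0 < z := one_pos.trans_le hz
  have hlog := one_sub_inv_le_log_of_pos hz0
  have : z * z⁻¹ = 1 := mul_inv_cancel₀ hz0.ne'
  nlinarith [inv_le_one_of_one_le₀ hz]

lemma sub_one_sub_log_le_max_mul_sq_of_lt_one {z : ℝ} (hz : 0 < z) (hz1 : z < 1) :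
    z - 1 - log z ≤ max 1 (log z⁻¹) * (z - 1) ^ 2 := by
  set u := log z⁻¹
  set s := √z
  set t := 1 - z
  have hs : 0 < s := sqrt_pos.mpr hz
  have ht : 0 < t := sub_pos.mpr hz1
  have hu : u ≤ t / s := log_inv_le_sub_div_sqrt hz hz1.le
  have hsq : (z - 1) ^ 2 = t ^ 2 := by ring
  rw [hsq, show z - 1 - log z = u - t by simp only [u, t, log_inv]; ring]
  rcases le_total 1 (s * (1 + t)) with hp | hp
  · have : t / s ≤ t * (1 + t) := by
      rw [div_le_iff₀ hs]; nlinarith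
    nlinarith [le_max_left 1 u]
  · have hs2 : 1 - t ^ 2 = s ^ 2 * (1 + t) := by simp only [s, t]; rw [sq_sqrt hz.le]; ring
    have : u * (1 - t ^ 2) ≤ t := by
      calc u * (1 - t ^ 2) ≤ t / s * (1 - t ^ 2) := by gcongr; nlinarith
        _ = t * (s * (1 + t)) := by rw [hs2]; field_simp
        _ ≤ t := by nlinarith
    nlinarith [le_max_right 1 u]

lemma sub_one_sub_log_le_max_mul_sq {z₀ z : ℝ} (hz₀ : 0 < z₀) (hz : z₀ ≤ z) :
    z - 1 - log z ≤ max 1 (log (1 / z₀)) * (z - 1) ^ 2 := by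
  rcases le_or_gt 1 z with h1 | h1
  · calc z - 1 - log z ≤ (z - 1) ^ 2 := sub_one_sub_log_le_sq h1
      _ ≤ _ := le_mul_of_one_le_left (sq_nonneg _) (le_max_left _ _)
  · have hz0 : 0 < z := hz₀.trans_le hz
    calc z - 1 - log z ≤ max 1 (log z⁻¹) * (z - 1) ^ 2 :=
          sub_one_sub_log_le_max_mul_sq_of_lt_one hz0 h1
      _ ≤ _ := by
        rw [one_div]
        gcongr

end Real

namespace Matrix

variable {n 𝕜 : Type*} [Fintype n] [DecidableEq n] [RCLike 𝕜] {A : Matrix n n 𝕜}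

open scoped MatrixOrder ComplexOrder in
lemma IsHermitian.le_eigenvalues_of_posSemidef_sub (hA : A.IsHermitian) {c : ℝ}
    (h : (A - c • (1 : Matrix n n 𝕜)).PosSemidef) (i : n) : c ≤ hA.eigenvalues i := by
  have hle : algebraMap ℝ (Matrix n n 𝕜) c ≤ A := by
    rwa [Algebra.algebraMap_eq_smul_one, le_iff]
  exact (algebraMap_le_iff_le_spectrum (a := A) hA.isSelfAdjoint).mp hle _
    (hA.eigenvalues_mem_spectrum_real i)

lemma IsHermitian.trace_cfc (hA : A.IsHermitian) (f : ℝ → ℝ) :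
    (cfc f A).trace = ∑ i, (f (hA.eigenvalues i) : 𝕜) := by
  rw [hA.cfc_eq, IsHermitian.cfc, Unitary.conjStarAlgAut_apply, trace_mul_cycle,
    Unitary.coe_star_mul_self, one_mul, trace_diagonal]
  rfl

lemma PosDef.trace_sub_card_sub_log_det {T : Matrix n n ℝ} (hT : T.PosDef) :
    T.trace - Fintype.card n - Real.log T.det =
      ∑ i, (hT.isHermitian.eigenvalues i - 1 - Real.log (hT.isHermitian.eigenvalues i)) := by
  rw [hT.isHermitian.trace_eq_sum_eigenvalues, hT.isHermitian.det_eq_prod_eigenvalues]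
  simp only [RCLike.ofReal_real_eq_id, id]
  rw [Real.log_prod fun i _ ↦ (hT.eigenvalues_pos i).ne']
  simp [Finset.sum_sub_distrib]

lemma IsHermitian.trace_transpose_sub_one_mul_sub_one {T : Matrix n n ℝ} (hT : T.IsHermitian) :
    ((T - 1)ᵀ * (T - 1)).trace = ∑ i, (hT.eigenvalues i - 1) ^ 2 := by
  have hsq : (T - 1)ᵀ * (T - 1) = cfc (fun x : ℝ ↦ (x - 1) ^ 2) T := by
    rw [cfc_pow .., cfc_sub .., cfc_id' .., cfc_const_one ..,
      ← conjTranspose_eq_transpose_of_trivial, (hT.sub isHermitian_one).eq, sq]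
  rw [hsq, hT.trace_cfc]
  simp only [RCLike.ofReal_real_eq_id, id]

end Matrix

theorem stmt_16_general {d : ℕ} (T : Matrix (Fin d) (Fin d) ℝ) (z₀ : ℝ)
    (hz₀ : 0 < z₀) (hT : T.PosDef)
    (heig : (T - z₀ • (1 : Matrix (Fin d) (Fin d) ℝ)).PosSemidef) :
    Matrix.trace T - d - Real.log T.det ≤
      max 1 (Real.log (1 / z₀)) * Matrix.trace ((T - 1)ᵀ * (T - 1)) := by
  have hTh := hT.isHermitian
  calc trace T - d - Real.log T.det
      = ∑ i, (hTh.eigenvalues i - 1 - Real.log (hTh.eigenvalues i)) := by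
        simpa using hT.trace_sub_card_sub_log_det
    _ ≤ ∑ i, max 1 (Real.log (1 / z₀)) * (hTh.eigenvalues i - 1) ^ 2 :=
        Finset.sum_le_sum fun i _ ↦
          Real.sub_one_sub_log_le_max_mul_sq hz₀ (hTh.le_eigenvalues_of_posSemidef_sub heig i)
    _ = max 1 (Real.log (1 / z₀)) * trace ((T - 1)ᵀ * (T - 1)) := by
        rw [hTh.trace_transpose_sub_one_mul_sub_one, Finset.mul_sum]

/-- For a symmetric positive definite `T` with all eigenvalues at least `z₀ ∈ (0,1]`,
`tr T − d − log det T ≤ max {1, log(1/z₀)} ‖T − I‖_F²`. -/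
theorem stmt_16 {d : ℕ} (T : Matrix (Fin d) (Fin d) ℝ) (z₀ : ℝ)
    (hz₀ : 0 < z₀) (hz₀1 : z₀ ≤ 1) (hT : T.PosDef)
    (heig : (T - z₀ • (1 : Matrix (Fin d) (Fin d) ℝ)).PosSemidef) :
    Matrix.trace T - d - Real.log T.det ≤
      max 1 (Real.log (1 / z₀)) * Matrix.trace ((T - 1)ᵀ * (T - 1)) :=
  stmt_16_general T z₀ hz₀ hT heig
end
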